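/- For every natural number m, the sum of the Walsh functions in the m-th dyadic block satisfies: sum_{k=2^m}^{2^{m+1}-1} W_k(x) = 2^m for x ∈ [0, 2^{-m-1}), = -2^m for x ∈ (2^{-m-1}, 2^{-m}), and = 0 for x ∈ (2^{-m}, 1]. -/

import Mathlib

open MeasureTheory Finset Filter

noncomputable def rademacher (n : ℕ) (x : ℝ) : ℝ :=
  if 1 ≤ x then -1 else (-1 : ℝ) ^ ⌊(2 : ℝ) ^ n * x⌋

noncomputable def walsh (n : ℕ) (x : ℝ) : ℝ :=
  ∏ i ∈ Finset.range (n + 1), if n.testBit i then rademacher (i + 1) x else 1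

/-!
For `j < 2 ^ m` the binary digits of `2 ^ m + j` are those of `j` plus the digit `m`, so
`W_{2^m + j} = r_{m+1} W_j`. Hence the block sum is `r_{m+1} D_m` with
`D_m = ∑_{j < 2^m} W_j = ∏_{i ≤ m} (1 + r_i)`. On `[0, 2^{-m})` every `r_i` with `i ≤ m` is `1`,
so `D_m = 2^m`; on `[2^{-m}, 1]` one of them is `-1`, so `D_m = 0`.
-/

lemma prod_range_ite_testBit_of_lt_two_pow {M : Type*} [CommMonoid M] (f : ℕ → M) {n N K : ℕ}
    (hn : n < 2 ^ N) (hNK : N ≤ K) :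
    ∏ i ∈ range K, (if n.testBit i then f i else 1) =
      ∏ i ∈ range N, (if n.testBit i then f i else 1) := by
  refine (prod_subset (range_subset_range.2 hNK) fun i _ hi => ?_).symm
  have hi : N ≤ i := not_lt.1 (mem_range.not.1 hi)
  rw [Nat.testBit_eq_false_of_lt (hn.trans_le (Nat.pow_le_pow_right two_pos hi)),
    if_neg Bool.false_ne_true]

lemma walsh_eq_prod_range {n N : ℕ} (hn : n < 2 ^ N) (x : ℝ) :
    walsh n x = ∏ i ∈ range N, (if n.testBit i then rademacher (i + 1) x else 1) := by
  rcases le_total N (n + 1) with hN | hN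
  · exact prod_range_ite_testBit_of_lt_two_pow _ hn hN
  · exact (prod_range_ite_testBit_of_lt_two_pow _ (Nat.lt_two_pow_self.trans
      (Nat.pow_lt_pow_succ one_lt_two)) hN).symm

lemma walsh_two_pow_add {m j : ℕ} (hj : j < 2 ^ m) (x : ℝ) :
    walsh (2 ^ m + j) x = rademacher (m + 1) x * walsh j x := by
  have hlt : 2 ^ m + j < 2 ^ (m + 1) := by rw [pow_succ]; omega
  have htop : (2 ^ m + j).testBit m = true := by
    rw [Nat.testBit_two_pow_add_eq, Nat.testBit_eq_false_of_lt hj, Bool.not_false]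
  rw [walsh_eq_prod_range hlt, walsh_eq_prod_range hj, prod_range_succ, htop, if_pos rfl, mul_comm]
  refine congrArg _ (prod_congr rfl fun i hi => ?_)
  rw [Nat.testBit_two_pow_add_gt (mem_range.1 hi)]

lemma sum_Ico_two_pow_walsh (m : ℕ) (x : ℝ) :
    ∑ k ∈ Ico (2 ^ m) (2 ^ (m + 1)), walsh k x =
      rademacher (m + 1) x * ∑ j ∈ range (2 ^ m), walsh j x := by
  have hlen : 2 ^ (m + 1) - 2 ^ m = 2 ^ m := by rw [pow_succ]; omega
  rw [sum_Ico_eq_sum_range, hlen, mul_sum]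
  exact sum_congr rfl fun j hj => walsh_two_pow_add (mem_range.1 hj) x

lemma sum_range_two_pow_walsh (m : ℕ) (x : ℝ) :
    ∑ j ∈ range (2 ^ m), walsh j x = ∏ i ∈ range m, (1 + rademacher (i + 1) x) := by
  induction m with
  | zero => simp [walsh]
  | succ m ih =>
    rw [← sum_range_add_sum_Ico _ (Nat.pow_le_pow_right two_pos m.le_succ),
      sum_Ico_two_pow_walsh, prod_range_succ, ih]
    ring

lemma rademacher_of_lt_one {x : ℝ} (hx : x < 1) (n : ℕ) :
    rademacher n x = (-1) ^ ⌊(2 : ℝ) ^ n * x⌋ :=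
  if_neg hx.not_ge

lemma rademacher_eq_one {n : ℕ} {x : ℝ} (h0 : 0 ≤ x) (h1 : x < ((2 : ℝ) ^ n)⁻¹) :
    rademacher n x = 1 := by
  have hfloor : ⌊(2 : ℝ) ^ n * x⌋ = 0 := by
    rw [Int.floor_eq_zero_iff]
    exact ⟨by positivity, by rwa [← lt_inv_mul_iff₀ (by positivity), mul_one]⟩
  rw [rademacher_of_lt_one (h1.trans_le (inv_le_one_of_one_le₀ (one_le_pow₀ one_le_two))), hfloor,
    zpow_zero]

lemma rademacher_succ_eq_neg_one {n : ℕ} {x : ℝ} (h0 : ((2 : ℝ) ^ (n + 1))⁻¹ ≤ x)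
    (h1 : x < ((2 : ℝ) ^ n)⁻¹) : rademacher (n + 1) x = -1 := by
  have hlow : 1 ≤ (2 : ℝ) ^ (n + 1) * x := (inv_le_iff_one_le_mul₀' (by positivity)).1 h0
  have hhigh : (2 : ℝ) ^ n * x < 1 := by rwa [← lt_inv_mul_iff₀ (by positivity), mul_one]
  have hfloor : ⌊(2 : ℝ) ^ (n + 1) * x⌋ = 1 :=
    Int.floor_eq_iff.2 ⟨by exact_mod_cast hlow, by rw [pow_succ]; push_cast; linarith⟩
  rw [rademacher_of_lt_one (h1.trans_le (inv_le_one_of_one_le₀ (one_le_pow₀ one_le_two))), hfloor,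
    zpow_one]

lemma exists_rademacher_eq_neg_one {m : ℕ} {x : ℝ} (h0 : ((2 : ℝ) ^ m)⁻¹ ≤ x) (h1 : x < 1) :
    ∃ i < m, rademacher (i + 1) x = -1 := by
  induction m with
  | zero => exact absurd h1 (by simpa using h0)
  | succ m ih =>
    by_cases hx : ((2 : ℝ) ^ m)⁻¹ ≤ x
    · obtain ⟨i, hi, hr⟩ := ih hx
      exact ⟨i, hi.trans (lt_add_one m), hr⟩
    · exact ⟨m, lt_add_one m, rademacher_succ_eq_neg_one h0 (not_le.1 hx)⟩

lemma prod_one_add_rademacher_eq_two_pow {m : ℕ} {x : ℝ} (h0 : 0 ≤ x)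
    (h1 : x < ((2 : ℝ) ^ m)⁻¹) : ∏ i ∈ range m, (1 + rademacher (i + 1) x) = 2 ^ m := by
  have hfactor : ∀ i ∈ range m, 1 + rademacher (i + 1) x = 2 := fun i hi => by
    rw [rademacher_eq_one h0 (h1.trans_le (inv_pow_le_inv_pow_of_le one_le_two (mem_range.1 hi)))]
    norm_num
  rw [prod_congr rfl hfactor, prod_const, card_range]

lemma prod_one_add_rademacher_eq_zero {m : ℕ} {x : ℝ} (h0 : ((2 : ℝ) ^ m)⁻¹ < x) (h1 : x ≤ 1) :
    ∏ i ∈ range m, (1 + rademacher (i + 1) x) = 0 := by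
  refine prod_eq_zero_iff.2 ?_
  rcases h1.lt_or_eq with h1 | rfl
  · obtain ⟨i, hi, hr⟩ := exists_rademacher_eq_neg_one h0.le h1
    exact ⟨i, mem_range.2 hi, by rw [hr, add_neg_cancel]⟩
  · have hm : m ≠ 0 := by rintro rfl; simp at h0
    exact ⟨0, mem_range.2 (Nat.pos_of_ne_zero hm),
      by rw [rademacher, if_pos le_rfl, add_neg_cancel]⟩

theorem walsh_block_sum_general (m : ℕ) (x : ℝ) :
    (x ∈ Set.Ico (0 : ℝ) (((2 : ℝ) ^ (m + 1))⁻¹) →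
      ∑ k ∈ Finset.Ico (2 ^ m) (2 ^ (m + 1)), walsh k x = 2 ^ m) ∧
    (x ∈ Set.Ioo (((2 : ℝ) ^ (m + 1))⁻¹) (((2 : ℝ) ^ m)⁻¹) →
      ∑ k ∈ Finset.Ico (2 ^ m) (2 ^ (m + 1)), walsh k x = -(2 ^ m)) ∧
    (x ∈ Set.Ioc (((2 : ℝ) ^ m)⁻¹) 1 →
      ∑ k ∈ Finset.Ico (2 ^ m) (2 ^ (m + 1)), walsh k x = 0) := by
  simp only [sum_Ico_two_pow_walsh, sum_range_two_pow_walsh]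
  refine ⟨fun ⟨h0, h1⟩ => ?_, fun ⟨h0, h1⟩ => ?_, fun ⟨h0, h1⟩ => ?_⟩
  · have h1' := h1.trans_le (inv_pow_le_inv_pow_of_le one_le_two m.le_succ)
    rw [rademacher_eq_one h0 h1, prod_one_add_rademacher_eq_two_pow h0 h1', one_mul]
  · have hx0 : 0 ≤ x := (inv_pos.2 (by positivity)).le.trans h0.le
    rw [rademacher_succ_eq_neg_one h0.le h1, prod_one_add_rademacher_eq_two_pow hx0 h1, neg_one_mul]
  · rw [prod_one_add_rademacher_eq_zero h0 h1, mul_zero]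

theorem walsh_block_sum (m : ℕ) (x : ℝ) (hx : x ∈ Set.Icc (0 : ℝ) 1) :
    (x ∈ Set.Ico (0 : ℝ) (((2 : ℝ) ^ (m + 1))⁻¹) →
      ∑ k ∈ Finset.Ico (2 ^ m) (2 ^ (m + 1)), walsh k x = 2 ^ m) ∧
    (x ∈ Set.Ioo (((2 : ℝ) ^ (m + 1))⁻¹) (((2 : ℝ) ^ m)⁻¹) →
      ∑ k ∈ Finset.Ico (2 ^ m) (2 ^ (m + 1)), walsh k x = -(2 ^ m)) ∧
    (x ∈ Set.Ioc (((2 : ℝ) ^ m)⁻¹) 1 →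
      ∑ k ∈ Finset.Ico (2 ^ m) (2 ^ (m + 1)), walsh k x = 0) :=
  walsh_block_sum_general m x
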